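/- Let {T(v)} be a compatible tree representation of a finite simple graph G in which the roots 𝐮, 𝐯 of the subtrees of any two distinct vertices u, v are distinct nodes of the host tree. Then every enumeration v₁,…,vₙ of the vertices with d(𝐯₁) ≥ d(𝐯₂) ≥ … ≥ d(𝐯ₙ) is a strong elimination order of G. -/

import Mathlib

/-- A host tree: a finite tree (connected acyclic simple graph on a nonempty
finite node set) with a distinguished root and positive real edge weights. -/
structure HostTree where
  V : Type
  [fintypeV : Fintype V]
  [nonemptyV : Nonempty V]
  G : SimpleGraph V
  isTree : G.IsTree
  root : V
  w : V → V → ℝ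
  w_symm : ∀ x y : V, w x y = w y x
  w_pos : ∀ x y : V, G.Adj x y → 0 < w x y

attribute [instance] HostTree.fintypeV HostTree.nonemptyV

/-- The unique path in the host tree from the root to a node. -/
noncomputable def HostTree.rootPath (T : HostTree) (x : T.V) : T.G.Walk T.root x :=
  (T.isTree.existsUnique_path T.root x).choose

/-- The depth of a node: the sum of the weights of the edges on the unique
path from the root to the node. -/
noncomputable def HostTree.depth (T : HostTree) (x : T.V) : ℝ :=
  ((T.rootPath x).darts.map (fun d => T.w d.toProd.1 d.toProd.2)).sum

/-- A subtree of the host tree: a nonempty set of nodes inducing a connected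
subgraph. -/
def HostTree.IsSubtree (T : HostTree) (S : Set T.V) : Prop :=
  S.Nonempty ∧ (T.G.induce S).Connected

/-- `S₁` overshadows `S₂`: every node of `S₂ \ S₁` has strictly greater depth
than every node of `S₂ ∩ S₁`. -/
def HostTree.Overshadows (T : HostTree) (S₁ S₂ : Set T.V) : Prop :=
  ∀ x ∈ S₂ \ S₁, ∀ y ∈ S₂ ∩ S₁, T.depth y < T.depth x

/-- Two subtrees are compatible if one overshadows the other. -/
def HostTree.CompatiblePair (T : HostTree) (S₁ S₂ : Set T.V) : Prop :=
  T.Overshadows S₁ S₂ ∨ T.Overshadows S₂ S₁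

/-- `x` is the root of the subtree `S`: a node of `S` of minimum depth. -/
def HostTree.IsSubtreeRoot (T : HostTree) (S : Set T.V) (x : T.V) : Prop :=
  x ∈ S ∧ ∀ y ∈ S, T.depth x ≤ T.depth y

/-- The closed neighbourhood `N[v]` of a vertex. -/
def closedNbhd {α : Type*} (G : SimpleGraph α) (v : α) : Set α :=
  insert v (G.neighborSet v)

/-- A tree representation of `G`: a subtree `t v` of the host tree for every
vertex `v`, such that distinct vertices are adjacent iff their subtrees meet. -/
def IsTreeRep {α : Type*} (G : SimpleGraph α) (T : HostTree) (t : α → Set T.V) : Prop :=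
  (∀ v : α, T.IsSubtree (t v)) ∧
  ∀ u v : α, u ≠ v → (G.Adj u v ↔ (t u ∩ t v).Nonempty)

/-- A compatible tree representation: a tree representation all of whose
subtrees are pairwise compatible. -/
def IsCompatibleTreeRep {α : Type*} (G : SimpleGraph α) (T : HostTree)
    (t : α → Set T.V) : Prop :=
  IsTreeRep G T t ∧ ∀ u v : α, T.CompatiblePair (t u) (t v)

/-- A strong elimination order. -/
def IsStrongElimOrder {α : Type*} (G : SimpleGraph α) {n : ℕ} (σ : Fin n ≃ α) : Prop :=
  ∀ i j k l : Fin n, i < j → k < l →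
    σ k ∈ closedNbhd G (σ i) → σ l ∈ closedNbhd G (σ i) →
    σ k ∈ closedNbhd G (σ j) → σ l ∈ closedNbhd G (σ j)

/-!
Call `p` an ancestor of `q` when `p` lies on the path from the root to `q`. Each edge of the host
tree joins a node to its parent, so walking inside a subtree shows that all its nodes descend from
its root, and a walk leaving the descendants of a node must pass through that node. Hence when two
subtrees meet, the deeper of their two roots lies in both of them.

Take `i < j`, `k < l` with `T(σ i)` meeting `T(σ k)` and `T(σ l)`, and `T(σ j)` meeting `T(σ k)`.
Whichever of `σ i`, `σ k` has the deeper root, that root is a common node of the subtrees of the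
other pair; the two cases are mirror images of each other. Comparing root depths then either
exhibits a node of `T(σ j) ∩ T(σ l)` directly, or compatibility of the remaining pair does; the one
configuration compatibility leaves open forces that pair to share its root, hence, roots being
distinct, to consist of a single vertex.
-/

namespace HostTree

open SimpleGraph

noncomputable def walkWeight {T : HostTree} {x y : T.V} (W : T.G.Walk x y) : ℝ :=
  (W.darts.map fun d => T.w d.toProd.1 d.toProd.2).sum

def IsAncestor (T : HostTree) (p q : T.V) : Prop :=
  p ∈ (T.rootPath q).support

variable {T : HostTree} {p q x y z : T.V}

theorem depth_eq_walkWeight (x : T.V) : T.depth x = walkWeight (T.rootPath x) := rfl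

theorem walkWeight_append (W : T.G.Walk x y) (W' : T.G.Walk y z) :
    walkWeight (W.append W') = walkWeight W + walkWeight W' := by
  simp [walkWeight, Walk.darts_append]

theorem walkWeight_nonneg (W : T.G.Walk x y) : 0 ≤ walkWeight W :=
  List.sum_nonneg <| by
    simp only [List.mem_map]
    rintro _ ⟨d, -, rfl⟩
    exact (T.w_pos _ _ d.adj).le

theorem walkWeight_pos (hxy : x ≠ y) (W : T.G.Walk x y) : 0 < walkWeight W := by
  cases W with
  | nil => exact absurd rfl hxy
  | cons h W =>
    have hW := walkWeight_nonneg W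
    have hw := T.w_pos _ _ h
    simp only [walkWeight, Walk.darts_cons, List.map_cons, List.sum_cons] at hW ⊢
    linarith

theorem rootPath_isPath (x : T.V) : (T.rootPath x).IsPath :=
  (T.isTree.existsUnique_path T.root x).choose_spec.1

theorem eq_rootPath (W : T.G.Walk T.root x) (hW : W.IsPath) : W = T.rootPath x :=
  (T.isTree.existsUnique_path T.root x).choose_spec.2 W hW

theorem rootPath_concat (h : T.G.Adj x y) (hy : ¬ T.IsAncestor y x) :
    T.rootPath y = (T.rootPath x).concat h :=
  (eq_rootPath _ ((rootPath_isPath x).concat hy h)).symm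

theorem IsAncestor.rootPath_takeUntil [DecidableEq T.V] (h : T.IsAncestor p q) :
    (T.rootPath q).takeUntil p h = T.rootPath p :=
  eq_rootPath _ ((rootPath_isPath q).takeUntil h)

theorem isAncestor_refl (x : T.V) : T.IsAncestor x x :=
  (T.rootPath x).end_mem_support

theorem IsAncestor.trans (hpq : T.IsAncestor p q) (hqx : T.IsAncestor q x) :
    T.IsAncestor p x := by
  classical
  rw [IsAncestor, ← hqx.rootPath_takeUntil] at hpq
  exact (T.rootPath x).support_takeUntil_subset_support hqx hpq

theorem IsAncestor.depth_add_walkWeight [DecidableEq T.V] (h : T.IsAncestor p q) :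
    T.depth p + walkWeight ((T.rootPath q).dropUntil p h) = T.depth q := by
  rw [depth_eq_walkWeight, depth_eq_walkWeight q, ← h.rootPath_takeUntil, ← walkWeight_append,
    Walk.take_spec (T.rootPath q) h]

theorem IsAncestor.eq_of_depth_le (h : T.IsAncestor p q) (hd : T.depth q ≤ T.depth p) :
    p = q := by
  classical
  by_contra hpq
  linarith [h.depth_add_walkWeight, walkWeight_pos hpq ((T.rootPath q).dropUntil p h)]

theorem IsAncestor.total (hp : T.IsAncestor p x) (hq : T.IsAncestor q x) :
    T.IsAncestor p q ∨ T.IsAncestor q p := by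
  classical
  have prefix_of_ancestor {u : T.V} (hu : T.IsAncestor u x) :
      (T.rootPath u).support <+: (T.rootPath x).support := by
    rw [← hu.rootPath_takeUntil, ← congrArg Walk.support ((T.rootPath x).take_spec hu),
      Walk.support_append]
    exact List.prefix_append _ _
  rcases List.prefix_or_prefix_of_prefix (prefix_of_ancestor hp) (prefix_of_ancestor hq) with h | h
  · exact .inl (h.subset (T.rootPath p).end_mem_support)
  · exact .inr (h.subset (T.rootPath q).end_mem_support)

theorem IsAncestor.of_depth_le (hp : T.IsAncestor p x) (hq : T.IsAncestor q x)
    (hd : T.depth p ≤ T.depth q) : T.IsAncestor p q := by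
  rcases hp.total hq with h | h
  · exact h
  · rw [h.eq_of_depth_le hd]
    exact isAncestor_refl p

theorem isAncestor_or_isAncestor_of_adj (h : T.G.Adj x y) :
    T.IsAncestor x y ∨ T.IsAncestor y x := by
  by_cases hy : T.IsAncestor y x
  · exact .inr hy
  · left
    rw [IsAncestor, rootPath_concat h hy, Walk.support_concat]
    exact List.mem_append_left _ (T.rootPath x).end_mem_support

theorem IsAncestor.eq_or_isAncestor_of_adj (hp : T.IsAncestor p x) (h : T.G.Adj x y) :
    p = x ∨ T.IsAncestor p y := by
  by_cases hx : T.IsAncestor x y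
  · exact .inr (hp.trans hx)
  · rw [IsAncestor, rootPath_concat h.symm hx, Walk.support_concat] at hp
    rcases List.mem_append.1 hp with hp | hp
    · exact .inr hp
    · exact .inl (List.mem_singleton.1 hp)

theorem mem_support_of_isAncestor_of_not_isAncestor (W : T.G.Walk x y)
    (hx : T.IsAncestor p x) (hy : ¬ T.IsAncestor p y) : p ∈ W.support := by
  induction W with
  | nil => exact absurd hx hy
  | cons h W ih =>
    rcases hx.eq_or_isAncestor_of_adj h with rfl | hz
    · exact Walk.start_mem_support _
    · exact List.mem_cons_of_mem _ (ih hz hy)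

theorem IsSubtree.exists_walk {S : Set T.V} (hS : T.IsSubtree S) (hx : x ∈ S) (hy : y ∈ S) :
    ∃ W : T.G.Walk x y, ∀ z ∈ W.support, z ∈ S := by
  obtain ⟨W⟩ := hS.2.preconnected ⟨x, hx⟩ ⟨y, hy⟩
  refine ⟨(W.map (Embedding.induce S).toHom : T.G.Walk x y), fun z hz => ?_⟩
  change z ∈ (W.map (Embedding.induce S).toHom).support at hz
  rw [Walk.support_map, List.mem_map] at hz
  obtain ⟨⟨z, hz⟩, -, rfl⟩ := hz
  exact hz

theorem IsSubtreeRoot.isAncestor {S : Set T.V} {ρ : T.V} (hρ : T.IsSubtreeRoot S ρ)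
    (hS : T.IsSubtree S) (hx : x ∈ S) : T.IsAncestor ρ x := by
  obtain ⟨W, hW⟩ := hS.exists_walk hx hρ.1
  clear hx
  induction W with
  | nil => exact isAncestor_refl _
  | cons h W ih =>
    have hu := hW _ (Walk.start_mem_support _)
    have hv := ih hρ (fun z hz => hW z (List.mem_cons_of_mem _ hz))
    rcases isAncestor_or_isAncestor_of_adj h with huv | hvu
    · exact hv.of_depth_le huv (hρ.2 _ hu)
    · exact hv.trans hvu

theorem IsSubtreeRoot.eq_of_depth_le {S : Set T.V} {ρ : T.V} (hρ : T.IsSubtreeRoot S ρ)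
    (hS : T.IsSubtree S) (hx : x ∈ S) (hd : T.depth x ≤ T.depth ρ) : x = ρ :=
  ((hρ.isAncestor hS hx).eq_of_depth_le hd).symm

theorem IsSubtreeRoot.mem_of_isAncestor {S : Set T.V} {ρ : T.V} (hρ : T.IsSubtreeRoot S ρ)
    (hS : T.IsSubtree S) (hx : x ∈ S) (hp : T.IsAncestor p x) (hd : T.depth ρ ≤ T.depth p) :
    p ∈ S := by
  by_cases hpρ : T.IsAncestor p ρ
  · rw [hpρ.eq_of_depth_le hd]
    exact hρ.1
  · obtain ⟨W, hW⟩ := hS.exists_walk hx hρ.1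
    exact hW p (mem_support_of_isAncestor_of_not_isAncestor W hp hpρ)

theorem Overshadows.mem_of_depth_le {S₁ S₂ : Set T.V} (h : T.Overshadows S₁ S₂)
    (hy : y ∈ S₂ ∩ S₁) (hx : x ∈ S₂) (hd : T.depth x ≤ T.depth y) : x ∈ S₁ := by
  by_contra hx₁
  exact (h x ⟨hx, hx₁⟩ y hy).not_ge hd

theorem Overshadows.root_mem {S₁ S₂ : Set T.V} {ρ : T.V} (h : T.Overshadows S₁ S₂)
    (hρ : T.IsSubtreeRoot S₂ ρ) (hS : (S₂ ∩ S₁).Nonempty) : ρ ∈ S₁ :=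
  let ⟨y, hy⟩ := hS
  h.mem_of_depth_le hy hρ.1 (hρ.2 y hy.1)

end HostTree

section TreeRep

variable {α : Type*} {G : SimpleGraph α} {T : HostTree} {t : α → Set T.V} {rt : α → T.V}

theorem IsTreeRep.mem_closedNbhd_iff (h : IsTreeRep G T t) {u v : α} :
    v ∈ closedNbhd G u ↔ (t u ∩ t v).Nonempty := by
  rcases eq_or_ne v u with rfl | hvu
  · simpa [closedNbhd] using (h.1 v).1
  · rw [closedNbhd, Set.mem_insert_iff, or_iff_right hvu]
    exact h.2 u v hvu.symm

theorem IsTreeRep.root_mem_of_depth_le (h : IsTreeRep G T t)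
    (hrt : ∀ v, T.IsSubtreeRoot (t v) (rt v)) {u v : α} (huv : (t u ∩ t v).Nonempty)
    (hd : T.depth (rt v) ≤ T.depth (rt u)) : rt u ∈ t v :=
  let ⟨_, hx⟩ := huv
  (hrt v).mem_of_isAncestor (h.1 v) hx.2 ((hrt u).isAncestor (h.1 u) hx.1) hd

theorem IsCompatibleTreeRep.inter_nonempty_of_root_mem (h : IsCompatibleTreeRep G T t)
    (hrt : ∀ v, T.IsSubtreeRoot (t v) (rt v)) (hinj : Function.Injective rt) {p q x y : α}
    (hpq : rt p ∈ t q) (hpy : rt p ∈ t y) (hxq : (t x ∩ t q).Nonempty)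
    (hyq : T.depth (rt y) ≤ T.depth (rt q)) (hxp : T.depth (rt x) ≤ T.depth (rt p)) :
    (t x ∩ t y).Nonempty := by
  rcases le_or_gt (T.depth (rt x)) (T.depth (rt q)) with hxq_depth | hqx_depth
  · exact ⟨rt q, h.1.root_mem_of_depth_le hrt (Set.inter_comm _ _ ▸ hxq) hxq_depth,
      h.1.root_mem_of_depth_le hrt ⟨rt p, hpq, hpy⟩ hyq⟩
  · have hxq_mem : rt x ∈ t q := h.1.root_mem_of_depth_le hrt hxq hqx_depth.le
    rcases h.2 q y with hq_over | hy_over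
    · obtain rfl : y = q := hinj <|
        (hrt q).eq_of_depth_le (h.1.1 q) (hq_over.root_mem (hrt y) ⟨rt p, hpy, hpq⟩) hyq
      exact hxq
    · exact ⟨rt x, (hrt x).1, hy_over.mem_of_depth_le ⟨hpq, hpy⟩ hxq_mem hxp⟩

end TreeRep

theorem distinct_roots_bottom_up_strongElimOrder_general {α : Type}
    (G : SimpleGraph α) (T : HostTree) (t : α → Set T.V)
    (h : IsCompatibleTreeRep G T t)
    (rt : α → T.V) (hrt : ∀ v : α, T.IsSubtreeRoot (t v) (rt v))
    (hinj : Function.Injective rt)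
    {n : ℕ} (σ : Fin n ≃ α)
    (hmono : ∀ i j : Fin n, i ≤ j → T.depth (rt (σ j)) ≤ T.depth (rt (σ i))) :
    IsStrongElimOrder G σ := by
  intro i j k l hij hkl hki hli hkj
  simp only [h.1.mem_closedNbhd_iff] at hki hli hkj ⊢
  have hba := hmono i j hij.le
  have hdc := hmono k l hkl.le
  rcases le_total (T.depth (rt (σ k))) (T.depth (rt (σ i))) with hca | hac
  · exact h.inter_nonempty_of_root_mem hrt hinj (h.1.root_mem_of_depth_le hrt hki hca)
      (h.1.root_mem_of_depth_le hrt hli (hdc.trans hca)) hkj hdc hba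
  · rw [Set.inter_comm] at hki hkj hli ⊢
    exact h.inter_nonempty_of_root_mem hrt hinj (h.1.root_mem_of_depth_le hrt hki hac)
      (h.1.root_mem_of_depth_le hrt hkj (hba.trans hac)) hli hba hdc

/-- In a compatible tree representation with pairwise distinct subtree roots,
every enumeration of the vertices by non-increasing root depth is a strong
elimination order. -/
theorem distinct_roots_bottom_up_strongElimOrder {α : Type} [Fintype α]
    (G : SimpleGraph α) (T : HostTree) (t : α → Set T.V)
    (h : IsCompatibleTreeRep G T t)
    (rt : α → T.V) (hrt : ∀ v : α, T.IsSubtreeRoot (t v) (rt v))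
    (hinj : Function.Injective rt)
    {n : ℕ} (σ : Fin n ≃ α)
    (hmono : ∀ i j : Fin n, i ≤ j → T.depth (rt (σ j)) ≤ T.depth (rt (σ i))) :
    IsStrongElimOrder G σ :=
  distinct_roots_bottom_up_strongElimOrder_general G T t h rt hrt hinj σ hmono
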